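/- There exist parameters α₁, α₂, α₀, β₀ ∈ ℝ with α₁β₀² = α₂α₀² and β₀ ≠ 0, a field u : ℤ×ℤ → ℝ solving the transformed lSKdV equation for all (n,m), and a point (n,m) ∈ ℤ², such that for the characteristic Φ_{n,m} := u_{n,m} + α₀·n the symmetry determining expression Φ_{n,m}·∂₁q̃ + Φ_{n+1,m}·∂₂q̃ + Φ_{n,m+1}·∂₃q̃ + Φ_{n+1,m+1}·∂₄q̃, evaluated at (u_{n,m}, u_{n+1,m}, u_{n,m+1}, u_{n+1,m+1}), is nonzero. Hence the flow du_{n,m}/dσ₀ = u_{n,m} + α₀n is not a generalized symmetry of the lSKdV equation. -/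

import Mathlib

/-!
Every constant field `u ≡ k` solves the transformed lSKdV equation as soon as
`α₁β₀² = α₂α₀²`. Along it the four partial derivatives of `q̃` sum to zero, so the
constant part of `Φ = u + α₀ n` drops out of the determining expression; the part
`α₀ n` (weighted by `n` on the left and `n + 1` on the right of the quad) leaves
`−2α₂α₀²`, which is nonzero whenever `α₂α₀ ≠ 0`.
-/

/-- The transformed lSKdV quad polynomial
`q̃(a,b,c,d) = α₁ (a−c−β₀)(b−d−β₀) − α₂ (a−b−α₀)(c−d−α₀)`. -/
noncomputable def lSKdV_qt (α₁ α₂ α₀ β₀ a b c d : ℝ) : ℝ :=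
  α₁ * (a - c - β₀) * (b - d - β₀) - α₂ * (a - b - α₀) * (c - d - α₀)

theorem deriv_eq_of_forall_eq_mul_add {f : ℝ → ℝ} {p : ℝ} (hf : ∀ t, f t = p * t + f 0)
    (x : ℝ) : deriv f x = p := by
  rw [funext hf]
  simp

section lSKdV_qt

variable (α₁ α₂ α₀ β₀ a b c d : ℝ)

theorem lSKdV_qt_diag (k : ℝ) :
    lSKdV_qt α₁ α₂ α₀ β₀ k k k k = α₁ * β₀ ^ 2 - α₂ * α₀ ^ 2 := by
  unfold lSKdV_qt
  ring

theorem deriv_lSKdV_qt_fst :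
    deriv (fun t => lSKdV_qt α₁ α₂ α₀ β₀ t b c d) a =
      α₁ * (b - d - β₀) - α₂ * (c - d - α₀) :=
  deriv_eq_of_forall_eq_mul_add (fun t => by unfold lSKdV_qt; ring) a

theorem deriv_lSKdV_qt_snd :
    deriv (fun t => lSKdV_qt α₁ α₂ α₀ β₀ a t c d) b =
      α₁ * (a - c - β₀) + α₂ * (c - d - α₀) :=
  deriv_eq_of_forall_eq_mul_add (fun t => by unfold lSKdV_qt; ring) b

theorem deriv_lSKdV_qt_thd :
    deriv (fun t => lSKdV_qt α₁ α₂ α₀ β₀ a b t d) c =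
      -(α₁ * (b - d - β₀)) - α₂ * (a - b - α₀) :=
  deriv_eq_of_forall_eq_mul_add (fun t => by unfold lSKdV_qt; ring) c

theorem deriv_lSKdV_qt_fth :
    deriv (fun t => lSKdV_qt α₁ α₂ α₀ β₀ a b c t) d =
      -(α₁ * (a - c - β₀)) + α₂ * (a - b - α₀) :=
  deriv_eq_of_forall_eq_mul_add (fun t => by unfold lSKdV_qt; ring) d

/-- The determining expression of `Φ = u + α₀ n` along the constant field `u ≡ k`,
at a point with first coordinate `x`. -/
theorem lSKdV_determining_expr_const (k x : ℝ) :
    (k + α₀ * x) * deriv (fun t => lSKdV_qt α₁ α₂ α₀ β₀ t k k k) k +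
        (k + α₀ * (x + 1)) * deriv (fun t => lSKdV_qt α₁ α₂ α₀ β₀ k t k k) k +
        (k + α₀ * x) * deriv (fun t => lSKdV_qt α₁ α₂ α₀ β₀ k k t k) k +
        (k + α₀ * (x + 1)) * deriv (fun t => lSKdV_qt α₁ α₂ α₀ β₀ k k k t) k =
      -2 * α₂ * α₀ ^ 2 := by
  rw [deriv_lSKdV_qt_fst, deriv_lSKdV_qt_snd, deriv_lSKdV_qt_thd, deriv_lSKdV_qt_fth]
  ring

end lSKdV_qt

/-- there are parameters with `α₁β₀² = α₂α₀²`, `β₀ ≠ 0`, a solution `u`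
of the transformed lSKdV equation, and a point `(n,m)`, at which the symmetry
determining expression of the characteristic `Φ_{n,m} = u_{n,m} + α₀ n` is nonzero:
the flow `du_{n,m}/dσ₀ = u_{n,m} + α₀ n` is not a generalized symmetry of lSKdV. -/
theorem nonisospectral_flow_not_a_symmetry :
    ∃ (α₁ α₂ α₀ β₀ : ℝ) (u : ℤ × ℤ → ℝ) (n m : ℤ),
      α₁ * β₀ ^ 2 = α₂ * α₀ ^ 2 ∧ β₀ ≠ 0 ∧
      (∀ n m : ℤ,
        lSKdV_qt α₁ α₂ α₀ β₀ (u (n, m)) (u (n + 1, m)) (u (n, m + 1))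
          (u (n + 1, m + 1)) = 0) ∧
      (u (n, m) + α₀ * (n : ℝ)) *
          deriv (fun t => lSKdV_qt α₁ α₂ α₀ β₀ t (u (n + 1, m)) (u (n, m + 1))
            (u (n + 1, m + 1))) (u (n, m)) +
        (u (n + 1, m) + α₀ * ((n : ℝ) + 1)) *
          deriv (fun t => lSKdV_qt α₁ α₂ α₀ β₀ (u (n, m)) t (u (n, m + 1))
            (u (n + 1, m + 1))) (u (n + 1, m)) +
        (u (n, m + 1) + α₀ * (n : ℝ)) *
          deriv (fun t => lSKdV_qt α₁ α₂ α₀ β₀ (u (n, m)) (u (n + 1, m)) t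
            (u (n + 1, m + 1))) (u (n, m + 1)) +
        (u (n + 1, m + 1) + α₀ * ((n : ℝ) + 1)) *
          deriv (fun t => lSKdV_qt α₁ α₂ α₀ β₀ (u (n, m)) (u (n + 1, m)) (u (n, m + 1)) t)
            (u (n + 1, m + 1)) ≠ 0 := by
  refine ⟨1, 1, 1, 1, fun _ => 0, 0, 0, by norm_num, one_ne_zero,
    fun _ _ => by rw [lSKdV_qt_diag]; norm_num, ?_⟩
  rw [lSKdV_determining_expr_const]
  norm_num
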